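/- Let t = (t_1, …, t_m) ∈ [0,1]^m, α, β ∈ (0,1), and let Q and Q' be the empirical functionals built from t. Then sup{u ∈ [0,1] : Q(u) ≤ α} = t^l and inf{u ∈ [0,1] : Q'(u) ≤ β} = t^u, where t^l and t^u are the adaptive lower and upper cutoffs: t^l = t^{(r+1)} if r := r(t, α) < m and t^l = 1 if r = m; t^u = t^{(m−a)} if a := a(t, β) < m and t^u = 0 if a = m. -/

import Mathlib

open MeasureTheory Filter

/-- Order statistics of a finite tuple: the `i`-th smallest value (0-indexed). -/
noncomputable def ordStat {m : ℕ} (t : Fin m → ℝ) : Fin m → ℝ :=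
  t ∘ Tuple.sort t

/-- Cumulative average of the `q` smallest values, `(1/q) * ∑_{l=1}^q t^{(l)}`. -/
noncomputable def cumAvgLow {m : ℕ} (t : Fin m → ℝ) (q : ℕ) : ℝ :=
  (∑ i : Fin m, if (i : ℕ) < q then ordStat t i else 0) / q

/-- Cumulative average of `1 - (value)` over the `q` largest values,
`(1/q) * ∑_{l=1}^q (1 - t^{(m-l+1)})`. -/
noncomputable def cumAvgHigh {m : ℕ} (t : Fin m → ℝ) (q : ℕ) : ℝ :=
  (∑ i : Fin m, if m - q ≤ (i : ℕ) then 1 - ordStat t i else 0) / q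

/-- `r(t, α) = max {q ∈ {1,…,m} : (1/q) ∑_{l=1}^q t^{(l)} ≤ α}`, `0` if no such `q`. -/
noncomputable def rIdx {m : ℕ} (t : Fin m → ℝ) (α : ℝ) : ℕ :=
  sSup {q : ℕ | 1 ≤ q ∧ q ≤ m ∧ cumAvgLow t q ≤ α}

/-- `a(t, β) = max {q ∈ {1,…,m} : (1/q) ∑_{l=1}^q (1 - t^{(m-l+1)}) ≤ β}`, `0` if no such `q`. -/
noncomputable def aIdx {m : ℕ} (t : Fin m → ℝ) (β : ℝ) : ℕ :=
  sSup {q : ℕ | 1 ≤ q ∧ q ≤ m ∧ cumAvgHigh t q ≤ β}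

/-- Adaptive lower cutoff `t^l`: `t^{(r+1)}` if `r < m`, and `1` if `r = m`. -/
noncomputable def lowerCut {m : ℕ} (t : Fin m → ℝ) (α : ℝ) : ℝ :=
  if h : rIdx t α < m then ordStat t ⟨rIdx t α, h⟩ else 1

/-- Adaptive upper cutoff `t^u`: `t^{(m-a)}` if `a < m`, and `0` if `a = m`. -/
noncomputable def upperCut {m : ℕ} (t : Fin m → ℝ) (β : ℝ) : ℝ :=
  if h : aIdx t β < m then ordStat t ⟨m - 1 - aIdx t β, by omega⟩ else 0

/-- The `k`-th order statistic with 1-based index `k` (junk value `1` out of range). -/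
noncomputable def ordStatN {m : ℕ} (t : Fin m → ℝ) (k : ℕ) : ℝ :=
  if h : k - 1 < m then ordStat t ⟨k - 1, h⟩ else 1

/-- Empirical running-average functional `Q(u)` (equal to `0` below `t^{(1)}`,
using the convention `0/0 = 0`). -/
noncomputable def Qlow {m : ℕ} (t : Fin m → ℝ) (u : ℝ) : ℝ :=
  (∑ j : Fin m, if t j ≤ u then t j else 0) / (∑ j : Fin m, if t j ≤ u then (1:ℝ) else 0)

/-- Empirical running-average functional `Q'(u)` (equal to `0` above `t^{(m)}`,
using the convention `0/0 = 0`). -/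
noncomputable def Qhigh {m : ℕ} (t : Fin m → ℝ) (u : ℝ) : ℝ :=
  (∑ j : Fin m, if u ≤ t j then 1 - t j else 0) / (∑ j : Fin m, if u ≤ t j then (1:ℝ) else 0)

/-!
Write `N(u) = #{j | t j ≤ u}`. The sample points `≤ u` are exactly the `N(u)` smallest order
statistics, so `Q(u)` is the running average of the first `N(u)` order statistics. Running
averages of a sorted sequence are nondecreasing, hence `Q(u) ≤ α ↔ N(u) ≤ r(t, α)`, i.e.
`u < t^{(r+1)}`: the level set is `[0, t^{(r+1)})`, or all of `[0, 1]` when `r = m`.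
The statement for `Q'` is the one for `Q` applied to the reflected sample `1 - t`, whose order
statistics are those of `t`, reflected and in reverse order.
-/

open Finset

lemma sum_div_card_le_sum_div_card_of_subset {ι : Type*} [DecidableEq ι] {A B : Finset ι}
    {f : ι → ℝ} (hA : A.Nonempty) (hAB : A ⊆ B) (h : ∀ a ∈ A, ∀ b ∈ B \ A, f a ≤ f b) :
    (∑ a ∈ A, f a) / #A ≤ (∑ b ∈ B, f b) / #B := by
  have key : (#(B \ A) : ℝ) * ∑ a ∈ A, f a ≤ #A * ∑ b ∈ B \ A, f b :=
    calc (#(B \ A) : ℝ) * ∑ a ∈ A, f a = ∑ b ∈ B \ A, ∑ a ∈ A, f a := by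
          rw [sum_const, nsmul_eq_mul]
      _ ≤ ∑ b ∈ B \ A, ∑ _a ∈ A, f b := sum_le_sum fun b hb => sum_le_sum fun a ha => h a ha b hb
      _ = #A * ∑ b ∈ B \ A, f b := by simp only [sum_const, nsmul_eq_mul, mul_sum]
  have hB : (#B : ℝ) = #A + #(B \ A) := by
    rw [← Nat.cast_add, add_comm, card_sdiff_add_card_eq_card hAB]
  rw [← sum_sdiff hAB, hB, div_le_div_iff₀ (by positivity) (by positivity)]
  linear_combination key

lemma MonotoneOn.le_iff_le_sSup {m : ℕ} {g : ℕ → ℝ} (hg : MonotoneOn g (Set.Icc 1 m)) (α : ℝ)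
    {q : ℕ} (hq : q ∈ Set.Icc 1 m) :
    g q ≤ α ↔ q ≤ sSup {q | 1 ≤ q ∧ q ≤ m ∧ g q ≤ α} := by
  have hbdd : BddAbove {q | 1 ≤ q ∧ q ≤ m ∧ g q ≤ α} := ⟨m, fun _ hp => hp.2.1⟩
  refine ⟨fun h => le_csSup hbdd ⟨hq.1, hq.2, h⟩, fun h => ?_⟩
  have hne : {q | 1 ≤ q ∧ q ≤ m ∧ g q ≤ α}.Nonempty := by
    by_contra hempty
    rw [Set.not_nonempty_iff_eq_empty.mp hempty, csSup_empty] at h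
    exact Nat.one_le_iff_ne_zero.mp hq.1 (Nat.le_zero.mp h)
  obtain ⟨hr1, hrm, hr⟩ := Nat.sSup_mem hne hbdd
  exact (hg hq ⟨hr1, hrm⟩ h).trans hr

lemma Real.sInf_preimage_one_sub {V : Set ℝ} (hne : V.Nonempty) (hbdd : BddAbove V) :
    sInf ((1 - ·) ⁻¹' V) = 1 - sSup V := by
  have hV : (1 - ·) ⁻¹' V = -(OrderIso.subRight (1 : ℝ) '' V) := by
    ext u
    simp only [Set.mem_preimage, Set.mem_neg, Set.mem_image, OrderIso.subRight_apply]
    exact ⟨fun h => ⟨1 - u, h, by ring⟩, fun ⟨v, hv, hvu⟩ => by rwa [show 1 - u = v by linarith]⟩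
  rw [hV, Real.sInf_neg, ← OrderIso.map_csSup' _ hne hbdd, OrderIso.subRight_apply, neg_sub]

lemma Monotone.le_iff_lt_card_filter {m : ℕ} {α : Type*} [LinearOrder α] {f : Fin m → α}
    (hf : Monotone f) (u : α) (i : Fin m) : f i ≤ u ↔ (i : ℕ) < #{j | f j ≤ u} := by
  constructor
  · intro hi
    have : Iic i ⊆ ({j | f j ≤ u} : Finset (Fin m)) := fun j hj =>
      mem_filter.mpr ⟨mem_univ j, (hf (mem_Iic.mp hj)).trans hi⟩
    simpa using card_le_card this
  · intro hi
    by_contra! hlt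
    have : ({j | f j ≤ u} : Finset (Fin m)) ⊆ Iio i := fun j hj => by
      by_contra! hij
      exact (hlt.trans_le (hf (not_lt.mp (mt mem_Iio.mpr hij)))).not_ge (mem_filter.mp hj).2
    simpa using (card_le_card this).trans_lt' hi

section OrderStatistics

variable {m : ℕ}

lemma ordStat_monotone (t : Fin m → ℝ) : Monotone (ordStat t) :=
  Tuple.monotone_sort t

lemma ordStat_comp_antitone {g : ℝ → ℝ} (hg : Antitone g) (t : Fin m → ℝ) :
    ordStat (g ∘ t) = g ∘ ordStat t ∘ Fin.rev := by
  have hmono : Monotone ((g ∘ t) ∘ (Fin.revPerm.trans (Tuple.sort t))) :=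
    fun i j hij => hg (ordStat_monotone t (Fin.rev_le_rev.mpr hij))
  exact (Tuple.comp_sort_eq_comp_iff_monotone.mpr hmono).symm

lemma ordStat_one_sub (t : Fin m → ℝ) (i : Fin m) :
    ordStat (1 - t) i = 1 - ordStat t i.rev :=
  congrFun (ordStat_comp_antitone (fun _ _ h => sub_le_sub_left h 1) t) i

lemma card_filter_ordStat_le (t : Fin m → ℝ) (u : ℝ) :
    #{i | ordStat t i ≤ u} = #{j | t j ≤ u} :=
  card_equiv (Tuple.sort t) fun i => by simp only [mem_filter, mem_univ, true_and]; rfl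

lemma cumAvgLow_eq_sum_div_card (t : Fin m → ℝ) {q : ℕ} (hq : q ≤ m) :
    cumAvgLow t q
      = (∑ i ∈ {i : Fin m | (i : ℕ) < q}, ordStat t i) / #{i : Fin m | (i : ℕ) < q} := by
  rw [cumAvgLow, sum_filter, Fin.card_filter_val_lt, min_eq_right hq]

lemma cumAvgLow_monotoneOn (t : Fin m → ℝ) : MonotoneOn (cumAvgLow t) (Set.Icc 1 m) := by
  intro q hq q' hq' hqq'
  rw [cumAvgLow_eq_sum_div_card t hq.2, cumAvgLow_eq_sum_div_card t hq'.2]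
  refine sum_div_card_le_sum_div_card_of_subset ⟨⟨0, hq.1.trans hq.2⟩, by simp only [mem_filter, mem_univ, true_and]; exact hq.1⟩
    (fun i hi => by simp only [mem_filter, mem_univ, true_and] at hi ⊢; omega)
    fun i hi j hj => ordStat_monotone t ?_
  simp only [mem_filter, mem_univ, true_and, Finset.mem_sdiff] at hi hj
  exact Fin.le_iff_val_le_val.mpr (by omega)

lemma cumAvgHigh_eq_cumAvgLow_one_sub (t : Fin m → ℝ) (q : ℕ) :
    cumAvgHigh t q = cumAvgLow (1 - t) q := by
  rw [cumAvgHigh, cumAvgLow, ← Equiv.sum_comp Fin.revPerm]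
  congr 1
  refine sum_congr rfl fun i _ => ?_
  simp only [Fin.revPerm_apply, Fin.val_rev, ordStat_one_sub]
  exact if_congr (by omega) rfl rfl

lemma rIdx_le (t : Fin m → ℝ) (α : ℝ) : rIdx t α ≤ m :=
  csSup_le' fun _ hq => hq.2.1

lemma aIdx_eq_rIdx_one_sub (t : Fin m → ℝ) (β : ℝ) : aIdx t β = rIdx (1 - t) β := by
  simp only [aIdx, rIdx, cumAvgHigh_eq_cumAvgLow_one_sub]

lemma upperCut_eq_one_sub_lowerCut (t : Fin m → ℝ) (β : ℝ) :
    upperCut t β = 1 - lowerCut (1 - t) β := by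
  rw [upperCut, lowerCut]
  simp only [aIdx_eq_rIdx_one_sub]
  split_ifs with h
  · rw [ordStat_one_sub, sub_sub_cancel]
    congr 1
    ext
    simp only [Fin.val_rev]
    omega
  · ring

end OrderStatistics

section LevelSets

variable {m : ℕ}

lemma Qlow_eq_cumAvgLow (t : Fin m → ℝ) (u : ℝ) : Qlow t u = cumAvgLow t #{j | t j ≤ u} := by
  have hnum : (∑ j, if t j ≤ u then t j else 0)
      = ∑ i : Fin m, if (i : ℕ) < #{j | t j ≤ u} then ordStat t i else 0 := by
    rw [← Equiv.sum_comp (Tuple.sort t), ← card_filter_ordStat_le]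
    exact sum_congr rfl fun i _ =>
      if_congr ((ordStat_monotone t).le_iff_lt_card_filter u i) rfl rfl
  rw [Qlow, cumAvgLow, hnum, sum_boole]

lemma Qhigh_eq_Qlow_one_sub (t : Fin m → ℝ) (u : ℝ) : Qhigh t u = Qlow (1 - t) (1 - u) := by
  simp only [Qhigh, Qlow, Pi.sub_apply, Pi.one_apply, sub_le_sub_iff_left]

lemma Qlow_zero {t : Fin m → ℝ} (ht : ∀ j, 0 ≤ t j) : Qlow t 0 = 0 := by
  rw [Qlow, sum_eq_zero fun j _ => ite_eq_right_iff.mpr fun h => le_antisymm h (ht j), zero_div]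

lemma Qlow_le_iff (t : Fin m → ℝ) {α : ℝ} (hα : 0 ≤ α) (u : ℝ) :
    Qlow t u ≤ α ↔ #{j | t j ≤ u} ≤ rIdx t α := by
  rw [Qlow_eq_cumAvgLow]
  rcases Nat.eq_zero_or_pos #{j | t j ≤ u} with h0 | hpos
  · simp [h0, cumAvgLow, hα]
  · exact (cumAvgLow_monotoneOn t).le_iff_le_sSup α
      ⟨hpos, (card_le_univ _).trans_eq (Fintype.card_fin m)⟩

lemma sSup_levelSet_Qlow {t : Fin m → ℝ} (ht : ∀ j, t j ∈ Set.Icc (0 : ℝ) 1) {α : ℝ}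
    (hα : 0 ≤ α) : sSup {u | u ∈ Set.Icc (0 : ℝ) 1 ∧ Qlow t u ≤ α} = lowerCut t α := by
  simp_rw [Qlow_le_iff t hα]
  rw [lowerCut]
  split_ifs with hr
  · set c := ordStat t ⟨rIdx t α, hr⟩
    obtain ⟨hc0, hc1⟩ : c ∈ Set.Icc 0 1 := ht _
    have hset : {u | u ∈ Set.Icc (0 : ℝ) 1 ∧ #{j | t j ≤ u} ≤ rIdx t α} = Set.Ico 0 c := by
      ext u
      have hc := (ordStat_monotone t).le_iff_lt_card_filter u ⟨rIdx t α, hr⟩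
      rw [card_filter_ordStat_le] at hc
      simp only [Set.mem_ofPred_eq, Set.mem_Icc, Set.mem_Ico]
      exact ⟨fun ⟨⟨h0, _⟩, hu⟩ => ⟨h0, not_le.mp (mt hc.mp (not_lt.mpr hu))⟩,
        fun ⟨h0, hu⟩ => ⟨⟨h0, hu.le.trans hc1⟩, not_lt.mp (mt hc.mpr (not_le.mpr hu))⟩⟩
    rw [hset]
    -- `c = 0` leaves the level set empty, and `sSup ∅ = 0` in `ℝ`
    rcases hc0.eq_or_lt with hc0 | hc0
    · rw [← hc0, Set.Ico_self, Real.sSup_empty]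
    · exact csSup_Ico hc0
  · have hset : {u | u ∈ Set.Icc (0 : ℝ) 1 ∧ #{j | t j ≤ u} ≤ rIdx t α} = Set.Icc 0 1 := by
      ext u
      simp only [Set.mem_ofPred_eq, and_iff_left_iff_imp]
      exact fun _ => ((card_le_univ _).trans_eq (Fintype.card_fin m)).trans (not_lt.mp hr)
    rw [hset, csSup_Icc zero_le_one]

lemma sInf_levelSet_Qhigh {t : Fin m → ℝ} (ht : ∀ j, t j ∈ Set.Icc (0 : ℝ) 1) {β : ℝ}
    (hβ : 0 ≤ β) : sInf {u | u ∈ Set.Icc (0 : ℝ) 1 ∧ Qhigh t u ≤ β} = upperCut t β := by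
  have hs : ∀ j, (1 - t) j ∈ Set.Icc (0 : ℝ) 1 := fun j => by
    simpa [sub_nonneg, and_comm] using ht j
  have hset : {u | u ∈ Set.Icc (0 : ℝ) 1 ∧ Qhigh t u ≤ β}
      = (1 - ·) ⁻¹' {v | v ∈ Set.Icc (0 : ℝ) 1 ∧ Qlow (1 - t) v ≤ β} := by
    ext u
    simp [Qhigh_eq_Qlow_one_sub, sub_nonneg, and_comm]
  have hzero : (0 : ℝ) ∈ {v | v ∈ Set.Icc (0 : ℝ) 1 ∧ Qlow (1 - t) v ≤ β} :=
    ⟨⟨le_rfl, zero_le_one⟩, (Qlow_zero fun j => (hs j).1).trans_le hβ⟩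
  rw [hset, Real.sInf_preimage_one_sub ⟨0, hzero⟩ ⟨1, fun _ hv => hv.1.2⟩,
    sSup_levelSet_Qlow hs hβ, upperCut_eq_one_sub_lowerCut]

end LevelSets

/-- **Identities (4.9) and (4.12).** The adaptive lower and upper cutoffs are the level
crossings of the empirical functionals: `sup{u ∈ [0,1] : Q(u) ≤ α} = t^l` and
`inf{u ∈ [0,1] : Q'(u) ≤ β} = t^u`. -/
theorem stmt_11 {m : ℕ} (t : Fin m → ℝ) (ht : ∀ i, t i ∈ Set.Icc (0:ℝ) 1)
    (α β : ℝ) (hα : α ∈ Set.Ioo (0:ℝ) 1) (hβ : β ∈ Set.Ioo (0:ℝ) 1) :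
    sSup {u | u ∈ Set.Icc (0:ℝ) 1 ∧ Qlow t u ≤ α} = lowerCut t α ∧
    sInf {u | u ∈ Set.Icc (0:ℝ) 1 ∧ Qhigh t u ≤ β} = upperCut t β :=
  ⟨sSup_levelSet_Qlow ht hα.1.le, sInf_levelSet_Qhigh ht hβ.1.le⟩
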